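/- In the 1-D Fourier sampling setting, let y ∈ ℝ^n, λ > 0, and let e₁ ∈ ℝ^n be the first standard basis vector (so that ⟨φ(x), e₁⟩ = 1 for every x ∈ 𝕋). If m is a finite nonnegative Borel measure on 𝕋 with Φm = y − λ e₁, then m minimizes the Blasso objective J_y over all finite signed Borel measures on 𝕋; consequently every minimizer m' of J_y satisfies Φm' = y − λ e₁. (This is the saturation case E_y = 𝕋, η_y ≡ 1, in the proof of Theorem 5.2, where μ̂(y) = y − λ δ₁.) -/

import Mathlib

open MeasureTheory

instance : Fact ((0 : ℝ) < 1) := ⟨one_pos⟩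

/-- The 1-D Fourier sampling feature map
`φ(x) = (1, (√2 sin(2πℓx))_{ℓ=1}^{f_c}, (√2 cos(2πℓx))_{ℓ=1}^{f_c})` on `𝕋 = ℝ/ℤ`,
realized via the exponential map `toCircle x = exp(2πix)`. -/
noncomputable def fourierPhi (fc : ℕ) (x : AddCircle (1 : ℝ)) :
    EuclideanSpace ℝ (Unit ⊕ Fin fc ⊕ Fin fc) :=
  WithLp.toLp 2 fun (i : Unit ⊕ Fin fc ⊕ Fin fc) => match i with
    | Sum.inl _ => 1
    | Sum.inr (Sum.inl ℓ) =>
        Real.sqrt 2 * (((AddCircle.toCircle x : ℂ)) ^ ((ℓ : ℕ) + 1)).im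
    | Sum.inr (Sum.inr ℓ) =>
        Real.sqrt 2 * (((AddCircle.toCircle x : ℂ)) ^ ((ℓ : ℕ) + 1)).re

/-- `Φ m = ∫ φ dm` for a finite signed Borel measure `m`, via the Jordan decomposition. -/
noncomputable def blassoPhi {Ω : Type*} [MeasurableSpace Ω] {ι : Type*} [Fintype ι]
    (φ : Ω → EuclideanSpace ℝ ι) (m : SignedMeasure Ω) : EuclideanSpace ℝ ι :=
  (∫ x, φ x ∂m.toJordanDecomposition.posPart) -
    ∫ x, φ x ∂m.toJordanDecomposition.negPart

/-- The Blasso objective `J_y(m) = (1/2)‖Φm − y‖₂² + λ|m|_TV`. -/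
noncomputable def blassoObj {Ω : Type*} [MeasurableSpace Ω] {ι : Type*} [Fintype ι]
    (φ : Ω → EuclideanSpace ℝ ι) (lam : ℝ) (y : EuclideanSpace ℝ ι)
    (m : SignedMeasure Ω) : ℝ :=
  (1 / 2) * ‖blassoPhi φ m - y‖ ^ 2 + lam * (m.totalVariation Set.univ).toReal

/-!
Since `⟪e, φ x⟫ = 1` for every `x`, integrating gives `⟪e, Φμ⟫ = μ⁺(Ω) - μ⁻(Ω) ≤ |μ|_TV` for
every signed measure `μ`, with equality when `μ` is nonnegative. Completing the square,
`J_y(μ) ≥ ½‖Φμ - (y - λe)‖² + λ⟪e, y⟫ - λ²‖e‖²/2`, and a nonnegative `m` with `Φm = y - λe`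
attains this bound. Hence `m` is a minimizer, and any `μ` with `J_y(μ) ≤ J_y(m)` must make the
square vanish.
-/

open Set
open scoped InnerProductSpace

namespace MeasureTheory

lemma Measure.toJordanDecomposition_toSignedMeasure {Ω : Type*} [MeasurableSpace Ω]
    (m : Measure Ω) [IsFiniteMeasure m] :
    m.toSignedMeasure.toJordanDecomposition = ⟨m, 0, .zero_right⟩ :=
  SignedMeasure.toJordanDecomposition_eq <| by
    simp [JordanDecomposition.toSignedMeasure]

lemma SignedMeasure.totalVariation_real_univ {Ω : Type*} [MeasurableSpace Ω]
    (μ : SignedMeasure Ω) :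
    (μ.totalVariation univ).toReal =
      μ.toJordanDecomposition.posPart.real univ + μ.toJordanDecomposition.negPart.real univ := by
  rw [SignedMeasure.totalVariation, Measure.add_apply,
    ENNReal.toReal_add (measure_ne_top _ _) (measure_ne_top _ _), measureReal_def, measureReal_def]

end MeasureTheory

open MeasureTheory

lemma half_norm_sub_sq_add_inner {E : Type*} [NormedAddCommGroup E] [InnerProductSpace ℝ E]
    (v y e : E) (lam : ℝ) :
    1 / 2 * ‖v - y‖ ^ 2 + lam * ⟪e, v⟫_ℝ =
      1 / 2 * ‖v - (y - lam • e)‖ ^ 2 + (lam * ⟪e, y⟫_ℝ - lam ^ 2 * ‖e‖ ^ 2 / 2) := by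
  rw [sub_sub_eq_add_sub, add_sub_right_comm, norm_add_sq_real, norm_smul, inner_smul_right,
    inner_sub_left, real_inner_comm e v, real_inner_comm e y, mul_pow, Real.norm_eq_abs, sq_abs]
  ring

section Blasso

variable {Ω ι : Type*} [MeasurableSpace Ω] [Fintype ι] {φ : Ω → EuclideanSpace ℝ ι}
  {e y : EuclideanSpace ℝ ι} {lam : ℝ}

lemma inner_integral_eq_measureReal_univ (he : ∀ x, ⟪e, φ x⟫_ℝ = 1) {ν : Measure Ω}
    (hφ : Integrable φ ν) : ⟪e, ∫ x, φ x ∂ν⟫_ℝ = ν.real univ := by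
  rw [← integral_inner hφ]
  simp [he]

lemma blassoPhi_toSignedMeasure (m : Measure Ω) [IsFiniteMeasure m] :
    blassoPhi φ m.toSignedMeasure = ∫ x, φ x ∂m := by
  simp [blassoPhi, Measure.toJordanDecomposition_toSignedMeasure]

lemma totalVariation_toSignedMeasure_real_univ (m : Measure Ω) [IsFiniteMeasure m] :
    (m.toSignedMeasure.totalVariation univ).toReal = m.real univ := by
  simp [SignedMeasure.totalVariation_real_univ, Measure.toJordanDecomposition_toSignedMeasure]

lemma inner_blassoPhi_le_totalVariation (he : ∀ x, ⟪e, φ x⟫_ℝ = 1)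
    (hφ : ∀ (ν : Measure Ω) [IsFiniteMeasure ν], Integrable φ ν) (μ : SignedMeasure Ω) :
    ⟪e, blassoPhi φ μ⟫_ℝ ≤ (μ.totalVariation univ).toReal := by
  rw [blassoPhi, inner_sub_right, inner_integral_eq_measureReal_univ he (hφ _),
    inner_integral_eq_measureReal_univ he (hφ _), SignedMeasure.totalVariation_real_univ]
  linarith [measureReal_nonneg (μ := μ.toJordanDecomposition.negPart) (s := univ)]

lemma le_blassoObj (he : ∀ x, ⟪e, φ x⟫_ℝ = 1)
    (hφ : ∀ (ν : Measure Ω) [IsFiniteMeasure ν], Integrable φ ν) (hlam : 0 ≤ lam)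
    (μ : SignedMeasure Ω) :
    1 / 2 * ‖blassoPhi φ μ - (y - lam • e)‖ ^ 2 + (lam * ⟪e, y⟫_ℝ - lam ^ 2 * ‖e‖ ^ 2 / 2) ≤
      blassoObj φ lam y μ := by
  rw [blassoObj, ← half_norm_sub_sq_add_inner]
  gcongr
  exact inner_blassoPhi_le_totalVariation he hφ μ

lemma blassoObj_toSignedMeasure (he : ∀ x, ⟪e, φ x⟫_ℝ = 1)
    (m : Measure Ω) [IsFiniteMeasure m] (hφ : Integrable φ m)
    (hm : blassoPhi φ m.toSignedMeasure = y - lam • e) :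
    blassoObj φ lam y m.toSignedMeasure = lam * ⟪e, y⟫_ℝ - lam ^ 2 * ‖e‖ ^ 2 / 2 := by
  rw [blassoObj, totalVariation_toSignedMeasure_real_univ,
    ← inner_integral_eq_measureReal_univ he hφ, ← blassoPhi_toSignedMeasure,
    half_norm_sub_sq_add_inner, hm, sub_self, norm_zero]
  ring

theorem blassoObj_toSignedMeasure_le (he : ∀ x, ⟪e, φ x⟫_ℝ = 1)
    (hφ : ∀ (ν : Measure Ω) [IsFiniteMeasure ν], Integrable φ ν) (hlam : 0 ≤ lam)
    (m : Measure Ω) [IsFiniteMeasure m] (hm : blassoPhi φ m.toSignedMeasure = y - lam • e)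
    (μ : SignedMeasure Ω) :
    blassoObj φ lam y m.toSignedMeasure ≤ blassoObj φ lam y μ := by
  rw [blassoObj_toSignedMeasure he m (hφ m) hm]
  linarith [le_blassoObj (y := y) he hφ hlam μ, sq_nonneg ‖blassoPhi φ μ - (y - lam • e)‖]

theorem blassoPhi_eq_of_blassoObj_le (he : ∀ x, ⟪e, φ x⟫_ℝ = 1)
    (hφ : ∀ (ν : Measure Ω) [IsFiniteMeasure ν], Integrable φ ν) (hlam : 0 ≤ lam)
    (m : Measure Ω) [IsFiniteMeasure m] (hm : blassoPhi φ m.toSignedMeasure = y - lam • e)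
    {μ : SignedMeasure Ω} (hμ : blassoObj φ lam y μ ≤ blassoObj φ lam y m.toSignedMeasure) :
    blassoPhi φ μ = y - lam • e := by
  rw [blassoObj_toSignedMeasure he m (hφ m) hm] at hμ
  have hdist : ‖blassoPhi φ μ - (y - lam • e)‖ ^ 2 ≤ 0 := by
    linarith [le_blassoObj (y := y) he hφ hlam μ]
  rwa [sq_nonpos_iff, norm_eq_zero, sub_eq_zero] at hdist

end Blasso

lemma continuous_fourierPhi (fc : ℕ) : Continuous (fourierPhi fc) := by
  refine (PiLp.continuous_toLp 2 _).comp (continuous_pi ?_)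
  rintro (⟨⟩ | ℓ | ℓ) <;> dsimp only <;> fun_prop

lemma inner_single_fourierPhi (fc : ℕ) (x : AddCircle (1 : ℝ)) :
    ⟪EuclideanSpace.single (Sum.inl ()) (1 : ℝ), fourierPhi fc x⟫_ℝ = 1 := by
  simp [EuclideanSpace.inner_single_left, fourierPhi]

lemma integrable_fourierPhi (fc : ℕ) (ν : Measure (AddCircle (1 : ℝ))) [IsFiniteMeasure ν] :
    Integrable (fourierPhi fc) ν :=
  (continuous_fourierPhi fc).integrable_of_hasCompactSupport (.of_compactSpace _)

/-- In 1-D Fourier sampling, if `m` is a finite nonnegative Borel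
measure on `𝕋` with `Φm = y − λe₁` (`e₁` the first standard basis vector, so
`⟨φ(x), e₁⟩ = 1` for all `x`), then `m` minimizes the Blasso objective `J_y` over all
finite signed Borel measures; consequently every minimizer `m'` of `J_y` satisfies
`Φm' = y − λe₁`. -/
theorem fourier_blasso_saturated_case {fc : ℕ}
    (y : EuclideanSpace ℝ (Unit ⊕ Fin fc ⊕ Fin fc)) (lam : ℝ) (hlam : 0 < lam)
    (e₁ : EuclideanSpace ℝ (Unit ⊕ Fin fc ⊕ Fin fc))
    (he₁ : e₁ = EuclideanSpace.single (Sum.inl Unit.unit) (1 : ℝ))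
    (m : Measure (AddCircle (1 : ℝ))) [IsFiniteMeasure m]
    (hm : blassoPhi (fourierPhi fc) m.toSignedMeasure = y - lam • e₁) :
    (∀ μ : SignedMeasure (AddCircle (1 : ℝ)),
        blassoObj (fourierPhi fc) lam y m.toSignedMeasure ≤ blassoObj (fourierPhi fc) lam y μ) ∧
      ∀ m' : SignedMeasure (AddCircle (1 : ℝ)),
        (∀ μ : SignedMeasure (AddCircle (1 : ℝ)),
          blassoObj (fourierPhi fc) lam y m' ≤ blassoObj (fourierPhi fc) lam y μ) →
        blassoPhi (fourierPhi fc) m' = y - lam • e₁ := by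
  subst he₁
  have he := inner_single_fourierPhi fc
  have hφ := integrable_fourierPhi fc
  exact ⟨blassoObj_toSignedMeasure_le he hφ hlam.le m hm,
    fun m' hm' => blassoPhi_eq_of_blassoObj_le he hφ hlam.le m hm (hm' _)⟩
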